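/- For simple random walk on ℤ^d with d ≥ 1: the Fourier transform satisfies ∫_{(-π,π]^d} D̂(k)^{2m} dk/(2π)^d = D^{∗2m}(0) ≤ ((2m)!/(2^m m!)) d^{-m} · c for some constant c depending only on m, not on d; in particular ∫ D̂(k)² dk/(2π)^d = 1/(2d). -/

import Mathlib

open MeasureTheory

/-- Convolution on `ℤ^d`. -/
noncomputable def convZd {d : ℕ} (f g : (Fin d → ℤ) → ℝ) (x : Fin d → ℤ) : ℝ :=
  ∑' y : Fin d → ℤ, f y * g (x - y)

/-- The step distribution of simple random walk: `D(x) = (2d)⁻¹ 𝟙{|x|₁=1}`. -/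
noncomputable def stepD (d : ℕ) (x : Fin d → ℤ) : ℝ :=
  if (∑ i, (x i).natAbs) = 1 then 1 / (2 * d) else 0

/-- `m`-fold convolution `D^{∗m}`, with `D^{∗0} = δ₀`. -/
noncomputable def Dconv (d : ℕ) : ℕ → (Fin d → ℤ) → ℝ
  | 0 => fun x => if x = 0 then 1 else 0
  | n + 1 => convZd (stepD d) (Dconv d n)

/-- `D̂(k) = (1/d) ∑_j cos(k_j)`. -/
noncomputable def Dhat (d : ℕ) (k : Fin d → ℝ) : ℝ :=
  (1 / d) * ∑ i, Real.cos (k i)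

/-!
Multiplying by `D̂(k)` averages the character `cos (k · x)` over the neighbours `x ∓ eᵢ`, exactly as
convolving with `D` does, and the characters integrate to `(2π)^d 𝟙{x = 0}` over the box; so both
sides of the Fourier identity satisfy the same recursion in `n`.

For the bound, `D^{∗2m}(0)` is `(2d)^{-2m}` times the number of closed walks of length `2m`.
A closed walk moves along each coordinate direction it uses at least twice, hence uses at most `m`
of the `d` directions, which leaves at most `(m + 1) d^m (2m)^{2m}` such walks.
-/

open Finset Real

lemma integral_Ioc_exp_int_mul_I (a : ℤ) :
    ∫ t in Set.Ioc (-π) π, Complex.exp (a * t * Complex.I) = if a = 0 then (2 * π : ℂ) else 0 := by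
  rw [← intervalIntegral.integral_of_le (by linarith [pi_pos])]
  split_ifs with ha
  · simp [ha]
    ring
  have hc : (a : ℂ) * Complex.I ≠ 0 := mul_ne_zero (Int.cast_ne_zero.mpr ha) Complex.I_ne_zero
  simp_rw [mul_right_comm (a : ℂ) _ Complex.I]
  rw [integral_exp_mul_complex hc, div_eq_zero_iff, sub_eq_zero]
  left
  rw [show (a : ℂ) * Complex.I * π = a * Complex.I * ↑(-π) + a * (2 * π * Complex.I) by
    push_cast; ring, Complex.exp_add, Complex.exp_int_mul_two_pi_mul_I, mul_one]

lemma card_finset_card_le {κ : Type*} [Fintype κ] [Nonempty κ] [DecidableEq κ] (m : ℕ) :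
    #{T : Finset κ | #T ≤ m} ≤ (m + 1) * Fintype.card κ ^ m := by
  have hsub : ({T | #T ≤ m} : Finset (Finset κ)) ⊆ (range (m + 1)).biUnion (powersetCard · univ) :=
    fun T hT => mem_biUnion.mpr
      ⟨#T, mem_range_succ_iff.mpr (mem_filter.mp hT).2, mem_powersetCard_univ.mpr rfl⟩
  refine (card_le_card hsub).trans ((card_biUnion_le_card_mul _ _ _ fun r hr => ?_).trans_eq
    (by rw [card_range]))
  rw [card_powersetCard, card_univ]
  exact (Nat.choose_le_pow _ _).trans
    (Nat.pow_le_pow_right Fintype.card_pos (mem_range_succ_iff.mp hr))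

lemma card_fun_card_image_fst_le {ι κ β : Type*} [Fintype ι] [DecidableEq ι] [Fintype κ]
    [Nonempty κ] [DecidableEq κ] [Fintype β] [DecidableEq β] (m : ℕ) :
    #{s : ι → κ × β | #(univ.image fun j => (s j).1) ≤ m} ≤
      (m + 1) * Fintype.card κ ^ m * (m * Fintype.card β) ^ Fintype.card ι := by
  have hsub : ({s | #(univ.image fun j => (s j).1) ≤ m} : Finset (ι → κ × β)) ⊆
      ({T | #T ≤ m} : Finset (Finset κ)).biUnion fun T => Fintype.piFinset fun _ => T ×ˢ univ :=
    fun s hs => mem_biUnion.mpr ⟨_, mem_filter.mpr ⟨mem_univ _, (mem_filter.mp hs).2⟩,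
      Fintype.mem_piFinset.mpr fun j => mem_product.mpr ⟨mem_image_of_mem _ (mem_univ j),
        mem_univ _⟩⟩
  refine (card_le_card hsub).trans ((card_biUnion_le_card_mul _ _ _ fun T hT => ?_).trans
    (Nat.mul_le_mul_right _ (card_finset_card_le m)))
  rw [Fintype.card_piFinset, prod_const, card_product, card_univ, card_univ]
  exact Nat.pow_le_pow_left (Nat.mul_le_mul_right _ (mem_filter.mp hT).2) _

namespace SimpleRandomWalk

variable {d : ℕ}

def unitVec (p : Fin d × Bool) : Fin d → ℤ := Pi.single p.1 (if p.2 then 1 else -1)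

lemma unitVec_apply_self (p : Fin d × Bool) : unitVec p p.1 = if p.2 then 1 else -1 :=
  Pi.single_eq_same _ _

lemma natAbs_sum_unitVec (p : Fin d × Bool) : ∑ i, (unitVec p i).natAbs = 1 := by
  rw [sum_eq_single p.1 (fun j _ hj => by simp [unitVec, Pi.single_eq_of_ne hj])
    (by simp), unitVec_apply_self]
  split <;> rfl

lemma unitVec_injective : Function.Injective (unitVec (d := d)) := by
  rintro ⟨i, b⟩ ⟨j, c⟩ h
  have hi := congrFun h i
  by_cases hij : i = j
  · subst hij
    cases b <;> cases c <;> simp_all [unitVec]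
  · cases b <;> simp [unitVec, Pi.single_eq_of_ne hij] at hi

lemma exists_unitVec_eq {y : Fin d → ℤ} (hy : ∑ i, (y i).natAbs = 1) :
    ∃ p, unitVec p = y := by
  obtain ⟨i, -, hi⟩ : ∃ i ∈ univ, (y i).natAbs ≠ 0 := by
    by_contra! h
    simp [sum_eq_zero h] at hy
  have hsplit := add_sum_erase univ (fun j => (y j).natAbs) (mem_univ i)
  have hrest : ∑ j ∈ univ.erase i, (y j).natAbs = 0 := by omega
  have hyi : y i = 1 ∨ y i = -1 := by omega
  refine ⟨(i, decide (y i = 1)), funext fun j => ?_⟩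
  by_cases hji : j = i
  · subst hji
    rcases hyi with h | h <;> simp [unitVec, h]
  · have := sum_eq_zero_iff.mp hrest j (by simp [hji])
    simp_all [unitVec]

lemma stepD_unitVec (p : Fin d × Bool) : stepD d (unitVec p) = 1 / (2 * d) := by
  simp [stepD, natAbs_sum_unitVec]

lemma stepD_neg (x : Fin d → ℤ) : stepD d (-x) = stepD d x := by
  simp [stepD]

lemma convZd_stepD (g : (Fin d → ℤ) → ℝ) (x : Fin d → ℤ) :
    convZd (stepD d) g x = ∑ p : Fin d × Bool, 1 / (2 * d) * g (x - unitVec p) := by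
  have hsupp : ∀ y ∉ univ.image unitVec, stepD d y * g (x - y) = 0 := by
    intro y hy
    have : ¬ ∑ i, (y i).natAbs = 1 := fun h =>
      hy (mem_image.mpr ((exists_unitVec_eq h).imp fun p hp => ⟨mem_univ p, hp⟩))
    simp [stepD, this]
  rw [convZd, tsum_eq_sum hsupp, sum_image fun p _ q _ h => unitVec_injective h]
  simp only [stepD_unitVec]

lemma Dconv_succ_apply (n : ℕ) (x : Fin d → ℤ) :
    Dconv d (n + 1) x = ∑ p : Fin d × Bool, 1 / (2 * d) * Dconv d n (x - unitVec p) :=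
  convZd_stepD _ x

lemma Dconv_one : Dconv d 1 = stepD d := by
  funext x
  show convZd (stepD d) (Dconv d 0) x = stepD d x
  rw [convZd, tsum_eq_single x fun y hy => by simp [Dconv, sub_eq_zero, Ne.symm hy]]
  simp [Dconv]

lemma Dconv_two_zero (hd : 0 < d) : Dconv d 2 0 = 1 / (2 * d) := by
  simp only [Dconv_succ_apply 1, Dconv_one, zero_sub, stepD_neg, stepD_unitVec, sum_const,
    card_univ, Fintype.card_prod, Fintype.card_fin, Fintype.card_bool, nsmul_eq_mul]
  field_simp
  push_cast
  ring

def walkEnd {n : ℕ} (s : Fin n → Fin d × Bool) : Fin d → ℤ := ∑ j, unitVec (s j)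

lemma walkEnd_cons {n : ℕ} (p : Fin d × Bool) (s : Fin n → Fin d × Bool) :
    walkEnd (Fin.cons p s : Fin (n + 1) → Fin d × Bool) = unitVec p + walkEnd s := by
  simp [walkEnd, Fin.sum_univ_succ]

lemma Dconv_eq_card (n : ℕ) (x : Fin d → ℤ) :
    Dconv d n x = (1 / (2 * d)) ^ n * #{s : Fin n → Fin d × Bool | walkEnd s = x} := by
  induction n generalizing x with
  | zero => by_cases h : x = 0 <;> simp [Dconv, walkEnd, h, eq_comm]
  | succ n ih =>
    have hcard : (#{s : Fin (n + 1) → Fin d × Bool | walkEnd s = x} : ℝ) =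
        ∑ p : Fin d × Bool, (#{s : Fin n → Fin d × Bool | walkEnd s = x - unitVec p} : ℝ) := by
      simp only [card_filter, Nat.cast_sum]
      rw [← (Fin.consEquiv fun _ => Fin d × Bool).sum_comp, Fintype.sum_prod_type]
      simp [Fin.consEquiv, walkEnd_cons, eq_sub_iff_add_eq, add_comm]
    rw [Dconv_succ_apply, hcard, mul_sum]
    simp only [ih]
    exact sum_congr rfl fun p _ => by ring

lemma walkEnd_apply {n : ℕ} (s : Fin n → Fin d × Bool) (i : Fin d) :
    walkEnd s i = ∑ j with (s j).1 = i, if (s j).2 then 1 else -1 := by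
  rw [walkEnd, Finset.sum_apply, sum_filter]
  refine sum_congr rfl fun j _ => ?_
  rcases eq_or_ne (s j).1 i with rfl | h
  · rw [if_pos rfl, unitVec_apply_self]
  · rw [if_neg h]
    exact Pi.single_eq_of_ne (Ne.symm h) _

lemma two_mul_card_image_fst_le {n : ℕ} {s : Fin n → Fin d × Bool} (hs : walkEnd s = 0) :
    2 * #(univ.image fun j => (s j).1) ≤ n := by
  refine (mul_card_image_le_card univ 2 fun i hi => ?_).trans (card_fin n).le
  obtain ⟨j, -, rfl⟩ := mem_image.mp hi
  have hne : #{j' | (s j').1 = (s j).1} ≠ 0 :=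
    card_ne_zero_of_mem (mem_filter.mpr ⟨mem_univ j, rfl⟩)
  have hone : #{j' | (s j').1 = (s j).1} ≠ 1 := by
    intro h1
    obtain ⟨j0, hj0⟩ := card_eq_one.mp h1
    have := congrFun hs (s j).1
    rw [walkEnd_apply, hj0, sum_singleton] at this
    cases h : (s j0).2 <;> simp [h] at this
  omega

lemma Dconv_two_mul_zero_le (hd : 0 < d) (m : ℕ) :
    Dconv d (2 * m) 0 ≤ (m + 1) * m ^ (2 * m) / d ^ m := by
  have : NeZero d := ⟨hd.ne'⟩
  have hclosed : #{s : Fin (2 * m) → Fin d × Bool | walkEnd s = 0} ≤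
      (m + 1) * d ^ m * (m * 2) ^ (2 * m) := by
    refine (card_le_card fun s hs => ?_).trans
      (by simpa using card_fun_card_image_fst_le (ι := Fin (2 * m)) (κ := Fin d) (β := Bool) m)
    have := two_mul_card_image_fst_le (mem_filter.mp hs).2
    exact mem_filter.mpr ⟨mem_univ s, by omega⟩
  calc Dconv d (2 * m) 0
      = (1 / (2 * d)) ^ (2 * m) * #{s : Fin (2 * m) → Fin d × Bool | walkEnd s = 0} :=
        Dconv_eq_card _ _
    _ ≤ (1 / (2 * d)) ^ (2 * m) * ((m + 1) * d ^ m * (m * 2) ^ (2 * m) : ℕ) := by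
        gcongr
    _ = (m + 1) * m ^ (2 * m) / d ^ m := by
        rw [div_pow, one_pow]
        push_cast
        field_simp
        ring

def phase (x : Fin d → ℤ) (k : Fin d → ℝ) : ℝ := ∑ i, (x i : ℝ) * k i

lemma phase_zero (k : Fin d → ℝ) : phase 0 k = 0 := by
  simp [phase]

lemma phase_sub (x y : Fin d → ℤ) (k : Fin d → ℝ) :
    phase (x - y) k = phase x k - phase y k := by
  simp [phase, sub_mul]

lemma phase_unitVec (p : Fin d × Bool) (k : Fin d → ℝ) :
    phase (unitVec p) k = (if p.2 then 1 else -1) * k p.1 := by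
  rw [phase, sum_eq_single p.1 (fun j _ hj => by simp [unitVec, Pi.single_eq_of_ne hj])
    (by simp), unitVec_apply_self]
  split <;> simp

@[fun_prop]
lemma continuous_Dhat : Continuous (Dhat d) := by
  unfold Dhat
  fun_prop

@[fun_prop]
lemma continuous_phase (x : Fin d → ℤ) : Continuous (phase x) := by
  unfold phase
  fun_prop

lemma Dhat_mul_cos_phase (x : Fin d → ℤ) (k : Fin d → ℝ) :
    Dhat d k * cos (phase x k) =
      ∑ p : Fin d × Bool, 1 / (2 * d) * cos (phase (x - unitVec p) k) := by
  simp only [Dhat, Fintype.sum_prod_type, Fintype.sum_bool, phase_sub, phase_unitVec, sum_mul,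
    mul_sum, if_true, Bool.false_eq_true, if_false, cos_sub]
  refine sum_congr rfl fun i _ => ?_
  simp only [neg_one_mul, one_mul, cos_neg, sin_neg]
  ring

def box (d : ℕ) : Set (Fin d → ℝ) := Set.univ.pi fun _ => Set.Ioc (-π) π

lemma integrableOn_box {E : Type*} [NormedAddCommGroup E] {f : (Fin d → ℝ) → E}
    (hf : Continuous f) : IntegrableOn f (box d) :=
  (hf.continuousOn.integrableOn_compact (isCompact_univ_pi fun _ => isCompact_Icc)).mono_set
    (Set.pi_mono fun _ _ => Set.Ioc_subset_Icc_self)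

lemma integral_cos_phase (x : Fin d → ℤ) :
    ∫ k in box d, cos (phase x k) = if x = 0 then (2 * π) ^ d else 0 := by
  have hcos : ∀ k, cos (phase x k) = RCLike.re (∏ i, Complex.exp (x i * k i * Complex.I)) := by
    intro k
    rw [← Complex.exp_sum, ← sum_mul, RCLike.re_to_complex, ← Complex.exp_ofReal_mul_I_re,
      phase]
    push_cast
    rfl
  have hbox : volume.restrict (box d) = Measure.pi fun _ => volume.restrict (Set.Ioc (-π) π) :=
    by rw [box, volume_pi, Measure.restrict_pi_pi]
  have hint : IntegrableOn (fun k => ∏ i, Complex.exp (x i * k i * Complex.I)) (box d) :=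
    integrableOn_box (by fun_prop)
  simp_rw [hcos]
  rw [integral_re hint, hbox,
    integral_fintype_prod_eq_prod fun i (t : ℝ) => Complex.exp (x i * t * Complex.I)]
  rw [prod_congr rfl fun i _ => integral_Ioc_exp_int_mul_I (x i), Fintype.prod_ite_zero,
    prod_const, card_univ, Fintype.card_fin]
  simp_rw [show (∀ i, x i = 0) ↔ x = 0 from funext_iff.symm]
  split_ifs
  · norm_cast
  · simp

lemma integral_Dhat_pow_mul_cos_phase (n : ℕ) (x : Fin d → ℤ) :
    ∫ k in box d, Dhat d k ^ n * cos (phase x k) = (2 * π) ^ d * Dconv d n x := by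
  induction n generalizing x with
  | zero => simp [integral_cos_phase, Dconv]
  | succ n ih =>
    have hint (y : Fin d → ℤ) : IntegrableOn (fun k => Dhat d k ^ n * cos (phase y k)) (box d) :=
      integrableOn_box (by fun_prop)
    calc ∫ k in box d, Dhat d k ^ (n + 1) * cos (phase x k)
        = ∫ k in box d, ∑ p : Fin d × Bool,
            1 / (2 * d) * (Dhat d k ^ n * cos (phase (x - unitVec p) k)) := by
          congr 1 with k
          rw [pow_succ, mul_assoc, Dhat_mul_cos_phase, mul_sum]
          exact sum_congr rfl fun p _ => by ring
      _ = (2 * π) ^ d * Dconv d (n + 1) x := by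
          simp only [integral_finsetSum _ fun p _ => (hint _).const_mul _, integral_const_mul, ih,
            Dconv_succ_apply, mul_sum]
          exact sum_congr rfl fun p _ => by ring

lemma integral_Dhat_pow (n : ℕ) :
    ∫ k in box d, Dhat d k ^ n = (2 * π) ^ d * Dconv d n 0 := by
  simpa [phase_zero] using integral_Dhat_pow_mul_cos_phase n 0

end SimpleRandomWalk

/-- `∫_{(-π,π]^d} D̂(k)^{2m} dk/(2π)^d = D^{∗2m}(0) ≤ ((2m)!/(2^m m!)) d^{-m} c` for a
constant `c = c(m)` independent of `d`; in particular `∫ D̂(k)² dk/(2π)^d = 1/(2d)`. -/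
theorem rw_moment_bound (m : ℕ) :
    ∃ c : ℝ, ∀ d : ℕ, 0 < d →
      ((∫ k in (Set.univ.pi fun _ : Fin d => Set.Ioc (-Real.pi) Real.pi),
          Dhat d k ^ (2 * m)) = (2 * Real.pi) ^ d * Dconv d (2 * m) 0
      ∧ Dconv d (2 * m) 0 ≤
          (((2 * m).factorial : ℝ) / (2 ^ m * m.factorial)) * c / d ^ m
      ∧ (∫ k in (Set.univ.pi fun _ : Fin d => Set.Ioc (-Real.pi) Real.pi),
          Dhat d k ^ 2) = (2 * Real.pi) ^ d * (1 / (2 * d))) := by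
  refine ⟨(m + 1) * m ^ (2 * m) * (2 ^ m * m.factorial) / (2 * m).factorial, fun d hd =>
    ⟨SimpleRandomWalk.integral_Dhat_pow _, ?_, ?_⟩⟩
  · calc Dconv d (2 * m) 0 ≤ (m + 1) * m ^ (2 * m) / d ^ m :=
          SimpleRandomWalk.Dconv_two_mul_zero_le hd m
      _ = _ := by
          have : ((2 * m).factorial : ℝ) ≠ 0 := by positivity
          field_simp
  · rw [← SimpleRandomWalk.Dconv_two_zero hd]
    exact SimpleRandomWalk.integral_Dhat_pow 2
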